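/- For all nonzero complex numbers z₁ and z₂, one has |Arg(z₁/z₂)| ≤ 2·|z₁ − z₂| / min(|z₁|, |z₂|). -/

import Mathlib

open Real

lemma key_arg_bound (w : ℂ) (hw : w ≠ 0) :
    |Complex.arg w| ≤ 2 * ‖w - 1‖ / min (‖w‖) 1 := by
  set r := ‖w‖ with hr
  set θ := Complex.arg w with hθ
  have hr0 : 0 < r := norm_pos_iff.mpr hw
  have hre : w.re = r * Real.cos θ := by
    rw [hθ, Complex.cos_arg hw, ← hr]
    field_simp
  -- |w-1|^2 = (r-1)^2 + 4 r sin(θ/2)^2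
  have hsq : ‖w - 1‖ ^ 2 = (r - 1) ^ 2 + 4 * r * Real.sin (θ / 2) ^ 2 := by
    have h1 : ‖w - 1‖ ^ 2 = (w.re - 1) ^ 2 + w.im ^ 2 := by
      rw [← Complex.normSq_eq_norm_sq, Complex.normSq_apply]
      simp [Complex.sub_re, Complex.sub_im]; ring
    have h2 : w.re ^ 2 + w.im ^ 2 = r ^ 2 := by
      rw [← Complex.normSq_eq_norm_sq, Complex.normSq_apply]; ring
    have h3 : Real.cos θ = 1 - 2 * Real.sin (θ / 2) ^ 2 := by
      have := Real.cos_two_mul' (θ / 2)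
      have h4 := Real.sin_sq_add_cos_sq (θ / 2)
      have : Real.cos (2 * (θ / 2)) = Real.cos (θ / 2) ^ 2 - Real.sin (θ / 2) ^ 2 := this
      rw [show 2 * (θ / 2) = θ by ring] at this
      linarith
    rw [h1]
    nlinarith [h2, h3, hre]
  set s := |Real.sin (θ / 2)| with hs
  have hs0 : 0 ≤ s := abs_nonneg _
  -- |w-1| ≥ 2 √r s
  have hlow : 2 * Real.sqrt r * s ≤ ‖w - 1‖ := by
    have hsq' : (2 * Real.sqrt r * s) ^ 2 ≤ ‖w - 1‖ ^ 2 := by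
      have : (2 * Real.sqrt r * s) ^ 2 = 4 * r * Real.sin (θ / 2) ^ 2 := by
        rw [mul_pow, mul_pow, sq_abs, Real.sq_sqrt hr0.le]; ring
      rw [this, hsq]; nlinarith [sq_nonneg (r - 1)]
    have h2 : 0 ≤ 2 * Real.sqrt r * s := by positivity
    nlinarith [norm_nonneg (w - 1)]
  -- |θ| ≤ 4 s
  have hθs : |θ| ≤ 4 * s := by
    have hpi : |θ| ≤ π := Complex.abs_arg_le_pi w
    have hx0 : 0 ≤ |θ| / 2 := by positivity
    have hx1 : |θ| / 2 ≤ π / 2 := by linarith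
    have hsin := Real.mul_le_sin hx0 hx1
    have hhalf : |θ| / 2 = |θ / 2| := by rw [abs_div]; norm_num
    have habs : Real.sin (|θ| / 2) = s := by
      rw [hs, hhalf]
      rcases abs_cases (θ / 2) with ⟨h, h'⟩ | ⟨h, h'⟩
      · rw [h, abs_of_nonneg (Real.sin_nonneg_of_nonneg_of_le_pi h'
          (by linarith [le_abs_self θ, Real.pi_pos]))]
      · rw [h, Real.sin_neg, abs_of_nonpos (Real.sin_nonpos_of_nonpos_of_neg_pi_le h'.le
          (by linarith [neg_abs_le θ]))]
    have hpi4 : π ≤ 4 := by linarith [Real.pi_le_four]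
    have h2pi : (1:ℝ) / 2 ≤ 2 / π := by
      rw [div_le_div_iff₀ (by norm_num) Real.pi_pos]; linarith
    nlinarith [Real.pi_pos]
  -- √r ≥ min r 1
  have hm0 : 0 < min r 1 := lt_min hr0 one_pos
  have hsqrt : min r 1 ≤ Real.sqrt r := by
    rcases le_total r 1 with h | h
    · rw [min_eq_left h]
      nlinarith [Real.sq_sqrt hr0.le, Real.sqrt_nonneg r, (Real.sqrt_le_one (x := r)).2 h]
    · rw [min_eq_right h]
      exact Real.one_le_sqrt.mpr h
  rw [le_div_iff₀ hm0]
  calc |θ| * min r 1 ≤ 4 * s * min r 1 := by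
        exact mul_le_mul_of_nonneg_right hθs hm0.le
    _ ≤ 4 * s * Real.sqrt r := by
        apply mul_le_mul_of_nonneg_left hsqrt; positivity
    _ = 2 * (2 * Real.sqrt r * s) := by ring
    _ ≤ 2 * ‖w - 1‖ := by linarith

/-- For all nonzero complex numbers `z₁` and `z₂`,
`|Arg(z₁/z₂)| ≤ 2·|z₁ − z₂| / min(|z₁|, |z₂|)`. -/
theorem abs_arg_div_le (z₁ z₂ : ℂ) (h₁ : z₁ ≠ 0) (h₂ : z₂ ≠ 0) :
    |Complex.arg (z₁ / z₂)| ≤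
      2 * ‖z₁ - z₂‖ / min (‖z₁‖) (‖z₂‖) := by
  have hw : z₁ / z₂ ≠ 0 := div_ne_zero h₁ h₂
  have hb : (0:ℝ) < ‖z₂‖ := norm_pos_iff.mpr h₂
  have key := key_arg_bound (z₁ / z₂) hw
  have e1 : ‖z₁ / z₂ - 1‖ = ‖z₁ - z₂‖ / ‖z₂‖ := by
    rw [← norm_div]
    congr 1
    field_simp
  have e2 : min (‖z₁ / z₂‖) 1
      = min (‖z₁‖) (‖z₂‖) / ‖z₂‖ := by
    rw [norm_div, ← min_div_div_right hb.le, div_self hb.ne']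
  rw [e1, e2] at key
  have e3 : 2 * (‖z₁ - z₂‖ / ‖z₂‖)
      / (min (‖z₁‖) (‖z₂‖) / ‖z₂‖)
      = 2 * ‖z₁ - z₂‖ / min (‖z₁‖) (‖z₂‖) := by
    have hm : (0:ℝ) < min (‖z₁‖) (‖z₂‖) :=
      lt_min (norm_pos_iff.mpr h₁) hb
    field_simp
  rw [e3] at key
  exact key
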